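/- arXiv:2212.07103 — 8 statements merged into one kernel-verified Lean document; each statement's English description precedes it below -/
import Mathlib

section
/- Let p ≥ 1 and let [ℓ_1,u_1),…,[ℓ_p,u_p) be nonempty half-open real intervals sorted so that ℓ_1 ≤ … ≤ ℓ_p. Define indices b_1 = 1 and, inductively, as long as b_j ≤ p, let b_{j+1} be the least index h with b_j < h ≤ p and ℓ_h ≥ min_{b_j ≤ g < h} u_g, or b_{j+1} = p+1 if no such h exists; let k be the unique index with b_{k+1} = p+1. For j = 1,…,k set t_j = min_{b_j ≤ g < b_{j+1}} u_g and s_j = (ℓ_{b_{j+1}−1} + t_j)/2. Then: (a) for every j and every g with b_j ≤ g < b_{j+1} one has s_j ∈ [ℓ_g, u_g), so the set {s_1,…,s_k} pierces the whole family; and (b) every set S ⊆ ℝ that pierces the whole family has at least k elements; hence the piercing number of the family equals k. (This is the correctness of Algorithm Min_IntSet: its output is a minimum set intersecting all the given intervals.) -/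
/-!
The blocks `[b j, b (j+1))` cut the sorted family into maximal runs of intervals with a common
point. Inside block `j` the last left endpoint `ℓ (b (j+1) - 1)` is the largest one, and it lies
below the block minimum `t j` of the right endpoints (otherwise the block would have been closed
earlier), so the midpoint `s j` pierces the whole block. Conversely, choosing in every block an
interval whose right endpoint is the block minimum gives `k` pairwise disjoint intervals, because
the next block starts at a left endpoint `≥ t j`; a piercing set needs a separate point in each.
-/

open Set

theorem exists_le_lt_succ_of_le_of_lt {α : Type*} [LinearOrder α] (b : ℕ → α) {x : α} {m n : ℕ}
    (hmn : m ≤ n) (hm : b m ≤ x) (hn : x < b n) :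
    ∃ j, m ≤ j ∧ j < n ∧ b j ≤ x ∧ x < b (j + 1) := by
  induction n, hmn using Nat.le_induction with
  | base => exact absurd (hm.trans_lt hn) (lt_irrefl _)
  | succ n hmn ih =>
    by_cases hbn : b n ≤ x
    · exact ⟨n, hmn, n.lt_succ_self, hbn, hn⟩
    · obtain ⟨j, hmj, hjn, hj⟩ := ih (not_le.1 hbn)
      exact ⟨j, hmj, hjn.trans n.lt_succ_self, hj⟩

theorem Finset.card_le_card_of_pairwiseDisjoint {ι α : Type*} {J : Finset ι} {I : ι → Set α}
    (hI : (J : Set ι).PairwiseDisjoint I) {S : Finset α} (hS : ∀ j ∈ J, ∃ x ∈ S, x ∈ I j) :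
    J.card ≤ S.card :=
  Finset.card_le_card_of_forall_subsingleton (fun j x => x ∈ I j) (fun j hj => hS j hj)
    fun _ _ _ ⟨hi, hxi⟩ _ ⟨hj, hxj⟩ => hI.elim_set hi hj _ hxi hxj

theorem add_div_two_mem_Ico {α : Type*} [Field α] [LinearOrder α] [IsStrictOrderedRing α]
    {x y t z : α} (hxy : x ≤ y) (hyt : y < t) (htz : t ≤ z) : (y + t) / 2 ∈ Ico x z :=
  ⟨by linarith, by linarith⟩

section BlockMin

variable {β : Type*} [ConditionallyCompleteLinearOrder β] (u : ℕ → β) {a c g : ℕ}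

theorem csInf_image_Ico_le (hg : g ∈ Ico a c) : sInf (u '' Ico a c) ≤ u g :=
  csInf_le ((finite_Ico a c).image u).bddBelow (mem_image_of_mem u hg)

theorem exists_mem_Ico_eq_csInf_image (hac : a < c) : ∃ g ∈ Ico a c, u g = sInf (u '' Ico a c) :=
  ((nonempty_Ico.2 hac).image u).csInf_mem ((finite_Ico a c).image u)

end BlockMin

/-- The indices `h ∈ (a, p]` whose interval has no point in common with all of the intervals
`a, …, h-1` (for a sorted family); the block started at `a` ends just before the least of them. -/
def blockBreaks (ℓ u : ℕ → ℝ) (p a : ℕ) : Set ℕ :=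
  {h | a < h ∧ h ≤ p ∧ sInf (u '' Ico a h) ≤ ℓ h}

def IsNextBlockStart (ℓ u : ℕ → ℝ) (p a c : ℕ) : Prop :=
  ((blockBreaks ℓ u p a).Nonempty → IsLeast (blockBreaks ℓ u p a) c) ∧
    (¬ (blockBreaks ℓ u p a).Nonempty → c = p + 1)

structure IsBlockSequence (ℓ u : ℕ → ℝ) (p : ℕ) (b : ℕ → ℕ) (k : ℕ) : Prop where
  first : b 1 = 1
  next : ∀ j, 1 ≤ j → j ≤ k → IsNextBlockStart ℓ u p (b j) (b (j + 1))
  le : ∀ j, 1 ≤ j → j ≤ k → b j ≤ p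
  last : b (k + 1) = p + 1

namespace IsNextBlockStart

variable {ℓ u : ℕ → ℝ} {p a c h : ℕ}

theorem le_add_one (hc : IsNextBlockStart ℓ u p a c) : c ≤ p + 1 := by
  by_cases hne : (blockBreaks ℓ u p a).Nonempty
  · exact (hc.1 hne).1.2.1.trans p.le_succ
  · exact (hc.2 hne).le

theorem lt (hc : IsNextBlockStart ℓ u p a c) (ha : a ≤ p) : a < c := by
  by_cases hne : (blockBreaks ℓ u p a).Nonempty
  · exact (hc.1 hne).1.1
  · rw [hc.2 hne]; omega

theorem lt_csInf (hc : IsNextBlockStart ℓ u p a c) (hah : a < h) (hhc : h < c) :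
    ℓ h < sInf (u '' Ico a h) := by
  by_contra! hle
  have hh : h ∈ blockBreaks ℓ u p a := ⟨hah, by have := hc.le_add_one; omega, hle⟩
  exact hhc.not_ge ((hc.1 ⟨h, hh⟩).2 hh)

theorem csInf_le (hc : IsNextBlockStart ℓ u p a c) (hcp : c ≤ p) : sInf (u '' Ico a c) ≤ ℓ c := by
  by_cases hne : (blockBreaks ℓ u p a).Nonempty
  · exact (hc.1 hne).1.2.2
  · have := hc.2 hne; omega

theorem sub_one_lt_csInf (hc : IsNextBlockStart ℓ u p a c) (hac : a < c)
    (hlast : ℓ (c - 1) < u (c - 1)) :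
    ℓ (c - 1) < sInf (u '' Ico a c) := by
  obtain ⟨g, ⟨hag, hgc⟩, hug⟩ := exists_mem_Ico_eq_csInf_image u hac
  rw [← hug]
  rcases (show g ≤ c - 1 by omega).eq_or_lt with rfl | hlt
  · exact hlast
  · exact (hc.lt_csInf (hag.trans_lt hlt) (by omega)).trans_le
      (csInf_image_Ico_le u ⟨hag, hlt⟩)

end IsNextBlockStart

namespace IsBlockSequence

variable {ℓ u : ℕ → ℝ} {p k : ℕ} {b : ℕ → ℕ} {i j g : ℕ}

theorem lt_succ (hb : IsBlockSequence ℓ u p b k) (hj : 1 ≤ j) (hjk : j ≤ k) : b j < b (j + 1) :=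
  (hb.next j hj hjk).lt (hb.le j hj hjk)

theorem strictMonoOn (hb : IsBlockSequence ℓ u p b k) : StrictMonoOn b (Icc 1 (k + 1)) :=
  strictMonoOn_of_lt_add_one ordConnected_Icc fun _ _ hj hj' =>
    hb.lt_succ hj.1 (by have := hj'.2; omega)

theorem one_le (hb : IsBlockSequence ℓ u p b k) (hj : 1 ≤ j) (hjk : j ≤ k + 1) : 1 ≤ b j :=
  hb.first ▸ hb.strictMonoOn.monotoneOn ⟨le_rfl, by omega⟩ ⟨hj, hjk⟩ hj

theorem exists_mem_block (hb : IsBlockSequence ℓ u p b k) {h : ℕ} (h1 : 1 ≤ h) (hp : h ≤ p) :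
    ∃ j, 1 ≤ j ∧ j ≤ k ∧ b j ≤ h ∧ h < b (j + 1) := by
  obtain ⟨j, h1j, hjk, hj⟩ := exists_le_lt_succ_of_le_of_lt b (by omega : 1 ≤ k + 1)
    (hb.first ▸ h1) (hb.last ▸ Nat.lt_succ_of_le hp)
  exact ⟨j, h1j, by omega, hj⟩

theorem midpoint_mem_Ico (hb : IsBlockSequence ℓ u p b k)
    (hne : ∀ h, 1 ≤ h → h ≤ p → ℓ h < u h) (hℓ : MonotoneOn ℓ (Icc 1 p))
    (hj : 1 ≤ j) (hjk : j ≤ k) (hg : b j ≤ g) (hg' : g < b (j + 1)) :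
    (ℓ (b (j + 1) - 1) + sInf (u '' Ico (b j) (b (j + 1)))) / 2 ∈ Ico (ℓ g) (u g) := by
  have hbj := hb.one_le hj (by omega)
  have hbj' := (hb.next j hj hjk).le_add_one
  refine add_div_two_mem_Ico (hℓ ⟨by omega, by omega⟩ ⟨by omega, by omega⟩ (by omega)) ?_
    (csInf_image_Ico_le u ⟨hg, hg'⟩)
  exact (hb.next j hj hjk).sub_one_lt_csInf (hb.lt_succ hj hjk) (hne _ (by omega) (by omega))

theorem csInf_le_of_lt (hb : IsBlockSequence ℓ u p b k) (hℓ : MonotoneOn ℓ (Icc 1 p))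
    (hi : 1 ≤ i) (hij : i < j) (hjk : j ≤ k) (hg : b j ≤ g) (hg' : g < b (j + 1)) :
    sInf (u '' Ico (b i) (b (i + 1))) ≤ ℓ g := by
  have hbi := hb.one_le (j := i + 1) (by omega) (by omega)
  have hbip := hb.le (i + 1) (by omega) (by omega)
  have hbij := hb.strictMonoOn.monotoneOn (a := i + 1) (b := j) ⟨by omega, by omega⟩
    ⟨by omega, by omega⟩ (by omega)
  have hbj := (hb.next j (by omega) hjk).le_add_one
  calc sInf (u '' Ico (b i) (b (i + 1))) ≤ ℓ (b (i + 1)) := (hb.next i hi (by omega)).csInf_le hbip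
    _ ≤ ℓ g := hℓ ⟨hbi, hbip⟩ ⟨by omega, by omega⟩ (by omega)

theorem le_card_of_pierces (hb : IsBlockSequence ℓ u p b k) (hℓ : MonotoneOn ℓ (Icc 1 p))
    (S : Finset ℝ) (hS : ∀ h, 1 ≤ h → h ≤ p → ∃ x ∈ S, x ∈ Ico (ℓ h) (u h)) : k ≤ S.card := by
  choose! g hg hug using fun j (hj : 1 ≤ j) (hjk : j ≤ k) =>
    exists_mem_Ico_eq_csInf_image u (hb.lt_succ hj hjk)
  have hsep : ∀ i j, 1 ≤ i → i < j → j ≤ k →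
      Disjoint (Ico (ℓ (g i)) (u (g i))) (Ico (ℓ (g j)) (u (g j))) := fun i j hi hij hjk =>
    have hle := hb.csInf_le_of_lt hℓ hi hij hjk (hg j (by omega) hjk).1 (hg j (by omega) hjk).2
    Ico_disjoint_Ico.2 (min_le_of_left_le ((hug i hi (by omega) ▸ hle).trans (le_max_right _ _)))
  have hdisj : (Finset.Icc 1 k : Set ℕ).PairwiseDisjoint fun j => Ico (ℓ (g j)) (u (g j)) := by
    intro i hi j hj hij
    simp only [Finset.coe_Icc, mem_Icc] at hi hj
    rcases hij.lt_or_gt with hlt | hlt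
    · exact hsep i j hi.1 hlt hj.2
    · exact (hsep j i hj.1 hlt hi.2).symm
  have hpierce : ∀ j ∈ Finset.Icc 1 k, ∃ x ∈ S, x ∈ Ico (ℓ (g j)) (u (g j)) := by
    intro j hj
    obtain ⟨hj, hjk⟩ := Finset.mem_Icc.1 hj
    have := hb.one_le hj (by omega)
    have := (hb.next j hj hjk).le_add_one
    exact hS _ (by have := (hg j hj hjk).1; omega) (by have := (hg j hj hjk).2; omega)
  simpa using Finset.card_le_card_of_pairwiseDisjoint hdisj hpierce

end IsBlockSequence

theorem min_intset_correct_general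
    (p : ℕ) (ℓ u : ℕ → ℝ)
    (hne : ∀ h, 1 ≤ h → h ≤ p → ℓ h < u h)
    (hsorted : ∀ h, 1 ≤ h → h < p → ℓ h ≤ ℓ (h + 1))
    (b : ℕ → ℕ) (k : ℕ)
    (hb1 : b 1 = 1)
    (hbrec : ∀ j, 1 ≤ j → j ≤ k →
      ((∃ h, b j < h ∧ h ≤ p ∧ sInf (u '' Set.Ico (b j) h) ≤ ℓ h) →
        IsLeast {h | b j < h ∧ h ≤ p ∧ sInf (u '' Set.Ico (b j) h) ≤ ℓ h} (b (j + 1))) ∧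
      ((¬ ∃ h, b j < h ∧ h ≤ p ∧ sInf (u '' Set.Ico (b j) h) ≤ ℓ h) →
        b (j + 1) = p + 1))
    (hbk : ∀ j, 1 ≤ j → j ≤ k → b j ≤ p)
    (hbk1 : b (k + 1) = p + 1)
    (t s : ℕ → ℝ)
    (ht : ∀ j, 1 ≤ j → j ≤ k → t j = sInf (u '' Set.Ico (b j) (b (j + 1))))
    (hs : ∀ j, 1 ≤ j → j ≤ k → s j = (ℓ (b (j + 1) - 1) + t j) / 2) :
    (∀ j, 1 ≤ j → j ≤ k → ∀ g, b j ≤ g → g < b (j + 1) → s j ∈ Set.Ico (ℓ g) (u g)) ∧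
    (∀ S : Finset ℝ, (∀ h, 1 ≤ h → h ≤ p → ∃ x ∈ S, x ∈ Set.Ico (ℓ h) (u h)) →
      k ≤ S.card) ∧
    sInf {n | ∃ S : Finset ℝ, S.card = n ∧
      ∀ h, 1 ≤ h → h ≤ p → ∃ x ∈ S, x ∈ Set.Ico (ℓ h) (u h)} = k := by
  have hb : IsBlockSequence ℓ u p b k := ⟨hb1, hbrec, hbk, hbk1⟩
  have hℓ : MonotoneOn ℓ (Icc 1 p) := monotoneOn_of_le_add_one ordConnected_Icc
    fun h _ hh hh' => hsorted h hh.1 (by have := hh'.2; omega)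
  have pierce : ∀ j, 1 ≤ j → j ≤ k → ∀ g, b j ≤ g → g < b (j + 1) → s j ∈ Ico (ℓ g) (u g) := by
    intro j hj hjk g hg hg'
    rw [hs j hj hjk, ht j hj hjk]
    exact hb.midpoint_mem_Ico hne hℓ hj hjk hg hg'
  have hS₀ : ∀ h, 1 ≤ h → h ≤ p → ∃ x ∈ (Finset.Icc 1 k).image s, x ∈ Ico (ℓ h) (u h) := by
    intro h h1 hp
    obtain ⟨j, hj, hjk, hjh, hhj⟩ := hb.exists_mem_block h1 hp
    exact ⟨s j, Finset.mem_image_of_mem s (Finset.mem_Icc.2 ⟨hj, hjk⟩), pierce j hj hjk h hjh hhj⟩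
  have hcard : ((Finset.Icc 1 k).image s).card = k :=
    le_antisymm (Finset.card_image_le.trans (by simp)) (hb.le_card_of_pierces hℓ _ hS₀)
  exact ⟨pierce, hb.le_card_of_pierces hℓ,
    IsLeast.csInf_eq ⟨⟨_, hcard, hS₀⟩, fun _ ⟨S, hn, hS⟩ => hn ▸ hb.le_card_of_pierces hℓ S hS⟩⟩

/-- Correctness of Algorithm Min_IntSet: given sorted nonempty half-open intervals
`[ℓ h, u h)` for `h = 1,…,p`, the indices `b 1 = 1 < b 2 < … < b (k+1) = p+1`
produced by the algorithm (characterized by `hbrec`) yield points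
`s j = (ℓ (b (j+1) - 1) + t j)/2` (with `t j` the block minimum of the upper
endpoints) such that (a) `s j` lies in every interval of its block, so
`{s 1, …, s k}` pierces the whole family, (b) every finite piercing set has at
least `k` elements, and hence the piercing number of the family equals `k`. -/
theorem min_intset_correct
    (p : ℕ) (hp : 1 ≤ p) (ℓ u : ℕ → ℝ)
    (hne : ∀ h, 1 ≤ h → h ≤ p → ℓ h < u h)
    (hsorted : ∀ h, 1 ≤ h → h < p → ℓ h ≤ ℓ (h + 1))
    (b : ℕ → ℕ) (k : ℕ)
    (hb1 : b 1 = 1)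
    (hbrec : ∀ j, 1 ≤ j → j ≤ k →
      ((∃ h, b j < h ∧ h ≤ p ∧ sInf (u '' Set.Ico (b j) h) ≤ ℓ h) →
        IsLeast {h | b j < h ∧ h ≤ p ∧ sInf (u '' Set.Ico (b j) h) ≤ ℓ h} (b (j + 1))) ∧
      ((¬ ∃ h, b j < h ∧ h ≤ p ∧ sInf (u '' Set.Ico (b j) h) ≤ ℓ h) →
        b (j + 1) = p + 1))
    (hbk : ∀ j, 1 ≤ j → j ≤ k → b j ≤ p)
    (hbk1 : b (k + 1) = p + 1)
    (t s : ℕ → ℝ)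
    (ht : ∀ j, 1 ≤ j → j ≤ k → t j = sInf (u '' Set.Ico (b j) (b (j + 1))))
    (hs : ∀ j, 1 ≤ j → j ≤ k → s j = (ℓ (b (j + 1) - 1) + t j) / 2) :
    (∀ j, 1 ≤ j → j ≤ k → ∀ g, b j ≤ g → g < b (j + 1) → s j ∈ Set.Ico (ℓ g) (u g)) ∧
    (∀ S : Finset ℝ, (∀ h, 1 ≤ h → h ≤ p → ∃ x ∈ S, x ∈ Set.Ico (ℓ h) (u h)) →
      k ≤ S.card) ∧
    sInf {n | ∃ S : Finset ℝ, S.card = n ∧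
      ∀ h, 1 ≤ h → h ≤ p → ∃ x ∈ S, x ∈ Set.Ico (ℓ h) (u h)} = k :=
  min_intset_correct_general p ℓ u hne hsorted b k hb1 hbrec hbk hbk1 t s ht hs
end

section
/- Let p ≥ 1 and let [ℓ_1,u_1),…,[ℓ_p,u_p) be nonempty half-open real intervals sorted so that ℓ_1 ≤ … ≤ ℓ_p, and let 1 ≤ m < p be such that the prefix intersection ⋂_{1 ≤ h ≤ m} [ℓ_h, u_h) is nonempty and ℓ_{m+1} ≥ min_{1 ≤ h ≤ m} u_h. Then the piercing number of the whole family {[ℓ_h,u_h) : 1 ≤ h ≤ p} equals 1 plus the piercing number of the suffix subfamily {[ℓ_h,u_h) : m < h ≤ p}. -/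
/-- For sorted nonempty half-open intervals `[ℓ h, u h)` (`h = 1,…,p`) and
`1 ≤ m < p` such that the prefix intersection `⋂_{1 ≤ h ≤ m} [ℓ h, u h)` is
nonempty and `ℓ (m+1) ≥ min_{1 ≤ h ≤ m} u h`, the piercing number of the whole
family equals `1` plus the piercing number of the suffix subfamily
`{[ℓ h, u h) : m < h ≤ p}`. -/
theorem piercing_number_prefix_split
    (p : ℕ) (hp : 1 ≤ p) (ℓ u : ℕ → ℝ)
    (hne : ∀ h, 1 ≤ h → h ≤ p → ℓ h < u h)
    (hsorted : ∀ h, 1 ≤ h → h < p → ℓ h ≤ ℓ (h + 1))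
    (m : ℕ) (hm1 : 1 ≤ m) (hmp : m < p)
    (hblock : (⋂ h ∈ Set.Icc 1 m, Set.Ico (ℓ h) (u h)).Nonempty)
    (hcut : sInf (u '' Set.Icc 1 m) ≤ ℓ (m + 1)) :
    sInf {n | ∃ S : Finset ℝ, S.card = n ∧
        ∀ h, 1 ≤ h → h ≤ p → ∃ x ∈ S, x ∈ Set.Ico (ℓ h) (u h)}
      = 1 + sInf {n | ∃ S : Finset ℝ, S.card = n ∧
        ∀ h, m < h → h ≤ p → ∃ x ∈ S, x ∈ Set.Ico (ℓ h) (u h)} := by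
  set A := {n | ∃ S : Finset ℝ, S.card = n ∧
      ∀ h, 1 ≤ h → h ≤ p → ∃ x ∈ S, x ∈ Set.Ico (ℓ h) (u h)} with hA
  set B := {n | ∃ S : Finset ℝ, S.card = n ∧
      ∀ h, m < h → h ≤ p → ∃ x ∈ S, x ∈ Set.Ico (ℓ h) (u h)} with hB
  -- monotonicity of ℓ on [1, p]
  have hmono : ∀ a b, 1 ≤ a → a ≤ b → b ≤ p → ℓ a ≤ ℓ b := by
    intro a b ha hab hbp
    induction b with
    | zero => omega
    | succ n ih =>
      rcases eq_or_lt_of_le hab with h | h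
      · rw [h]
      · exact le_trans (ih (by omega) (by omega)) (hsorted n (by omega) (by omega))
  -- A and B are nonempty
  have hAne : A.Nonempty := by
    refine ⟨(Finset.image ℓ (Finset.Icc 1 p)).card, Finset.image ℓ (Finset.Icc 1 p), rfl,
      fun h h1 hp' => ⟨ℓ h, Finset.mem_image_of_mem _ (Finset.mem_Icc.mpr ⟨h1, hp'⟩),
        le_refl _, hne h h1 hp'⟩⟩
  have hBne : B.Nonempty := by
    refine ⟨(Finset.image ℓ (Finset.Icc (m+1) p)).card, Finset.image ℓ (Finset.Icc (m+1) p), rfl,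
      fun h h1 hp' => ⟨ℓ h, Finset.mem_image_of_mem _ (Finset.mem_Icc.mpr ⟨by omega, hp'⟩),
        le_refl _, hne h (by omega) hp'⟩⟩
  -- sInf A ≥ 1
  have hApos : 1 ≤ sInf A := by
    by_contra hcon
    have h0 : sInf A = 0 := by omega
    obtain ⟨S, hScard, hSp⟩ := Nat.sInf_mem hAne
    rw [h0] at hScard
    obtain ⟨x, hxS, -⟩ := hSp 1 le_rfl hp
    rw [Finset.card_eq_zero] at hScard
    simp [hScard] at hxS
  apply le_antisymm
  · -- sInf A ≤ 1 + sInf B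
    obtain ⟨S, hScard, hSp⟩ := Nat.sInf_mem hBne
    obtain ⟨x, hx⟩ := hblock
    have hmem : (insert x S).card ∈ A := by
      refine ⟨insert x S, rfl, fun h h1 hp' => ?_⟩
      rcases le_or_gt h m with hhm | hhm
      · exact ⟨x, Finset.mem_insert_self _ _,
          Set.mem_iInter₂.mp hx h (Set.mem_Icc.mpr ⟨h1, hhm⟩)⟩
      · obtain ⟨y, hyS, hy⟩ := hSp h hhm hp'
        exact ⟨y, Finset.mem_insert_of_mem hyS, hy⟩
    calc sInf A ≤ (insert x S).card := Nat.sInf_le hmem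
      _ ≤ S.card + 1 := Finset.card_insert_le _ _
      _ = 1 + sInf B := by rw [hScard]; ring
  · -- 1 + sInf B ≤ sInf A
    obtain ⟨S, hScard, hSp⟩ := Nat.sInf_mem hAne
    -- the minimum of u over [1, m] is attained
    have hfin : (u '' Set.Icc 1 m).Finite := (Set.finite_Icc 1 m).image u
    have hnemp : (u '' Set.Icc 1 m).Nonempty :=
      ⟨u 1, Set.mem_image_of_mem u (Set.mem_Icc.mpr ⟨le_rfl, hm1⟩)⟩
    obtain ⟨hstar, hhstar, hustar⟩ := hnemp.csInf_mem hfin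
    rw [Set.mem_Icc] at hhstar
    -- the point of S piercing interval hstar
    obtain ⟨x, hxS, hxl, hxu⟩ := hSp hstar hhstar.1 (by omega)
    have hxlt : ∀ h, m < h → h ≤ p → x < ℓ h := by
      intro h hmh hhp
      calc x < u hstar := hxu
        _ ≤ ℓ (m + 1) := by rw [hustar]; exact hcut
        _ ≤ ℓ h := hmono (m + 1) h (by omega) (by omega) hhp
    have hmem : (S.erase x).card ∈ B := by
      refine ⟨S.erase x, rfl, fun h hmh hhp => ?_⟩
      obtain ⟨y, hyS, hyl, hyu⟩ := hSp h (by omega) hhp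
      refine ⟨y, Finset.mem_erase.mpr ⟨?_, hyS⟩, hyl, hyu⟩
      intro heq
      exact absurd hyl (by rw [heq]; exact not_le.mpr (hxlt h hmh hhp))
    have hcard : (S.erase x).card = S.card - 1 := Finset.card_erase_of_mem hxS
    have hle : sInf B ≤ S.card - 1 := hcard ▸ Nat.sInf_le hmem
    omega
end

section
/- Let N be a finite nonempty set (of branching nodes), let d ≥ 1, let f : N → {1,…,d} (the feature of each node), and let ℓ, u : N → ℝ with ℓ(n) < u(n) for every n ∈ N (the admissible threshold interval of each node). Call θ : N → ℝ admissible if ℓ(n) ≤ θ(n) < u(n) for every n ∈ N. Then the minimum, over all admissible θ, of the cardinality of the set of distinct pairs {(f(n), θ(n)) : n ∈ N} equals Σ_{i=1}^{d} π_i, where π_i is the piercing number of the subfamily of intervals {[ℓ(n), u(n)) : n ∈ N, f(n) = i} (with π_i = 0 when this subfamily is empty). (This is the reduction of the problem of minimizing the number of distinct branching conditions to one minimum intersecting set problem per feature.) -/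
/-!
The distinct pairs `(f n, θ n)` split by feature, so their number is the sum over the features `i`
of the number of distinct thresholds `θ n` with `f n = i`. Those thresholds pierce the intervals
of feature `i`, which gives `≥`; conversely, choosing an optimal piercing set for every feature
and letting `θ n` be one of its points in the interval of `n` gives `≤`.
-/

open Finset

section Piercing

variable {ι α : Type*}

noncomputable def piercingNumber (I : ι → Set α) (p : ι → Prop) : ℕ :=
  sInf {c | ∃ S : Finset α, S.card = c ∧ ∀ n, p n → ∃ x ∈ S, x ∈ I n}

variable {I : ι → Set α} {p : ι → Prop}

theorem piercingNumber_le_card {S : Finset α} (hS : ∀ n, p n → ∃ x ∈ S, x ∈ I n) :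
    piercingNumber I p ≤ S.card :=
  Nat.sInf_le ⟨S, rfl, hS⟩

theorem exists_card_eq_piercingNumber [Finite ι] (hI : ∀ n, (I n).Nonempty) :
    ∃ S : Finset α, S.card = piercingNumber I p ∧ ∀ n, p n → ∃ x ∈ S, x ∈ I n := by
  classical
  have := Fintype.ofFinite ι
  choose x hx using hI
  exact Nat.sInf_mem (s := {c | ∃ S : Finset α, S.card = c ∧ ∀ n, p n → ∃ x ∈ S, x ∈ I n})
    ⟨_, univ.image x, rfl, fun n _ => ⟨x n, mem_image_of_mem x (mem_univ n), hx n⟩⟩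

end Piercing

theorem card_image_prodMk_eq_sum_card_image_filter {ι κ α : Type*}
    [DecidableEq κ] [DecidableEq α]
    {t : Finset ι} {s : Finset κ} {f : ι → κ} (hf : ∀ n ∈ t, f n ∈ s) (θ : ι → α) :
    (t.image fun n => (f n, θ n)).card = ∑ i ∈ s, ({n ∈ t | f n = i}.image θ).card := by
  rw [card_eq_sum_card_fiberwise (f := Prod.fst) (t := s) (by simpa [Set.MapsTo] using hf)]
  refine sum_congr rfl fun i _ => ?_
  rw [filter_image, ← card_image_of_injective ({n ∈ t | f n = i}.image θ)
    (Prod.mk_right_injective i), image_image]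
  refine congrArg card (image_congr fun n hn => ?_)
  rw [mem_coe, mem_filter] at hn
  simp only [← hn.2, Function.comp_apply]

theorem sInf_card_image_prodMk_eq_sum_piercingNumber {ι κ α : Type*} [Fintype ι]
    [DecidableEq κ] [DecidableEq α] {s : Finset κ} {f : ι → κ} (hf : ∀ n, f n ∈ s)
    {I : ι → Set α} (hI : ∀ n, (I n).Nonempty) :
    sInf {c | ∃ θ : ι → α, (∀ n, θ n ∈ I n) ∧ (univ.image fun n => (f n, θ n)).card = c}
      = ∑ i ∈ s, piercingNumber I (f · = i) := by
  apply le_antisymm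
  · choose S hScard hS using fun i => exists_card_eq_piercingNumber (p := (f · = i)) hI
    choose θ hθS hθI using fun n => hS (f n) n rfl
    refine le_trans (Nat.sInf_le ⟨θ, hθI, rfl⟩) ?_
    rw [card_image_prodMk_eq_sum_card_image_filter (fun n _ => hf n)]
    refine sum_le_sum fun i _ => (card_le_card ?_).trans (hScard i).le
    intro x hx
    obtain ⟨n, hn, rfl⟩ := mem_image.1 hx
    exact (mem_filter.1 hn).2 ▸ hθS n
  · choose x hx using hI
    refine le_csInf ⟨_, x, hx, rfl⟩ ?_
    rintro c ⟨θ, hθ, rfl⟩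
    rw [card_image_prodMk_eq_sum_card_image_filter (fun n _ => hf n)]
    exact sum_le_sum fun i _ => piercingNumber_le_card fun n hn =>
      ⟨θ n, mem_image_of_mem θ (mem_filter.2 ⟨mem_univ n, hn⟩), hθ n⟩

theorem min_distinct_branching_conditions_eq_sum_piercing_general
    (ι : Type) [Fintype ι]
    (d : ℕ)
    (f : ι → ℕ) (hf : ∀ n, 1 ≤ f n ∧ f n ≤ d)
    (ℓ u : ι → ℝ) (hne : ∀ n, ℓ n < u n) :
    sInf {c | ∃ θ : ι → ℝ, (∀ n, ℓ n ≤ θ n ∧ θ n < u n) ∧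
        (Finset.univ.image fun n => (f n, θ n)).card = c}
      = ∑ i ∈ Finset.Icc 1 d,
          sInf {c | ∃ S : Finset ℝ, S.card = c ∧
            ∀ n, f n = i → ∃ x ∈ S, x ∈ Set.Ico (ℓ n) (u n)} :=
  sInf_card_image_prodMk_eq_sum_piercingNumber (fun n => mem_Icc.2 (hf n))
    (I := fun n => Set.Ico (ℓ n) (u n)) fun n => Set.nonempty_Ico.2 (hne n)

/-- Reduction of the minimization of the number of distinct branching conditions
to one minimum intersecting set problem per feature: for a finite nonempty set of
branching nodes with features `f n ∈ {1,…,d}` and admissible threshold intervals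
`[ℓ n, u n)`, the minimum over all admissible threshold assignments `θ` of the
number of distinct pairs `(f n, θ n)` equals the sum over the features
`i = 1,…,d` of the piercing numbers of the subfamilies
`{[ℓ n, u n) : f n = i}` (the piercing number being `0` for empty subfamilies). -/
theorem min_distinct_branching_conditions_eq_sum_piercing
    (ι : Type) [Fintype ι] [Nonempty ι]
    (d : ℕ) (hd : 1 ≤ d)
    (f : ι → ℕ) (hf : ∀ n, 1 ≤ f n ∧ f n ≤ d)
    (ℓ u : ι → ℝ) (hne : ∀ n, ℓ n < u n) :
    sInf {c | ∃ θ : ι → ℝ, (∀ n, ℓ n ≤ θ n ∧ θ n < u n) ∧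
        (Finset.univ.image fun n => (f n, θ n)).card = c}
      = ∑ i ∈ Finset.Icc 1 d,
          sInf {c | ∃ S : Finset ℝ, S.card = c ∧
            ∀ n, f n = i → ∃ x ∈ S, x ∈ Set.Ico (ℓ n) (u n)} :=
  min_distinct_branching_conditions_eq_sum_piercing_general ι d f hf ℓ u hne
end

section
/- Let X be a finite multiset of reals, θ ∈ ℝ, and k ∈ ℕ, and assume that (counting multiplicity) X has more than k elements x with x ≤ θ and more than k elements x with θ < x. Define ℓ* = sInf {a ∈ ℝ : card{x ∈ X : a < x ≤ θ} ≤ k} and u* = sSup {b ∈ ℝ : card{x ∈ X : θ < x ≤ b} ≤ k} (counts with multiplicity). Then {θ' ∈ ℝ : card{x ∈ X : min(θ,θ') < x ≤ max(θ,θ')} ≤ k} = Set.Ico ℓ* u*. (This is the claim that the set of thresholds changing at most k of the comparison outcomes is the half-open interval [ℓ*, u*) given by the displayed inf/sup formulas in the path-changeable-rate extension.) -/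
/-!
Write `N(a, b)` for the number of elements of `X` in `(a, b]`. The set `S` of left endpoints `a`
with `N(a, θ) ≤ k` is an upper set and the set `T` of right endpoints `b` with `N(θ, b) ≤ k` is a
lower set; both contain `θ`, and the hypotheses make `S` bounded below and `T` bounded above.
Since `X` is finite, `N(a, b)` does not change when `a` or `b` moves slightly to the right, so
`S` contains its infimum while `T` does not contain its supremum: `S = [ℓ*, ∞)` and
`T = (-∞, u*)`. A threshold `θ' ≤ θ` is admissible iff `θ' ∈ S`, and one with `θ < θ'` iff
`θ' ∈ T`.
-/

namespace Multiset

variable {α : Type*}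

theorem card_filter_le_card_filter (X : Multiset α) {p q : α → Prop} [DecidablePred p]
    [DecidablePred q] (h : ∀ x ∈ X, p x → q x) :
    card (X.filter p) ≤ card (X.filter q) := by
  simp only [← countP_eq_card_filter]
  induction X using Quot.inductionOn with
  | h l => simpa using List.countP_mono_left (by simpa using h)

section LinearOrder

variable [LinearOrder α] (X : Multiset α)

def countIoc (a b : α) : ℕ :=
  card (X.filter fun x => a < x ∧ x ≤ b)

theorem countIoc_self (a : α) : X.countIoc a a = 0 := by
  simp only [countIoc, card_eq_zero, filter_eq_nil]
  exact fun x _ hx => hx.1.not_ge hx.2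

theorem countIoc_mono {a a' b b' : α} (ha : a' ≤ a) (hb : b ≤ b') :
    X.countIoc a b ≤ X.countIoc a' b' :=
  X.card_filter_le_card_filter fun _ _ hx => ⟨ha.trans_lt hx.1, hx.2.trans hb⟩

theorem exists_gt_forall_notMem_Ioc [DenselyOrdered α] [NoMaxOrder α] (r : α) :
    ∃ r' > r, ∀ x ∈ X, x ∉ Set.Ioc r r' := by
  induction X using Multiset.induction_on with
  | empty => simpa using exists_gt r
  | cons x X ih =>
    obtain ⟨r', hr', hX⟩ := ih
    by_cases hx : r < x
    · obtain ⟨r'', hr'', hr''_lt⟩ := exists_between (lt_min hr' hx)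
      refine ⟨r'', hr'', fun y hy hyI => ?_⟩
      rcases mem_cons.1 hy with rfl | hy
      · exact (hyI.2.trans_lt (hr''_lt.trans_le (min_le_right _ _))).false
      · exact hX y hy ⟨hyI.1, hyI.2.trans (hr''_lt.le.trans (min_le_left _ _))⟩
    · refine ⟨r', hr', fun y hy hyI => ?_⟩
      rcases mem_cons.1 hy with rfl | hy
      · exact hx hyI.1
      · exact hX y hy hyI

theorem exists_gt_countIoc_le_countIoc_left [DenselyOrdered α] [NoMaxOrder α] (a : α) :
    ∃ a' > a, ∀ b, X.countIoc a b ≤ X.countIoc a' b := by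
  obtain ⟨a', ha', hgap⟩ := X.exists_gt_forall_notMem_Ioc a
  refine ⟨a', ha', fun b => X.card_filter_le_card_filter fun x hx hxI => ⟨?_, hxI.2⟩⟩
  exact not_le.1 fun h => hgap x hx ⟨hxI.1, h⟩

theorem exists_gt_countIoc_le_countIoc_right [DenselyOrdered α] [NoMaxOrder α] (b : α) :
    ∃ b' > b, ∀ a, X.countIoc a b' ≤ X.countIoc a b := by
  obtain ⟨b', hb', hgap⟩ := X.exists_gt_forall_notMem_Ioc b
  refine ⟨b', hb', fun a => X.card_filter_le_card_filter fun x hx hxI => ⟨hxI.1, ?_⟩⟩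
  exact not_lt.1 fun h => hgap x hx ⟨h, hxI.2⟩

theorem bddBelow_setOf_countIoc_le {b : α} {k : ℕ} (hk : k < card (X.filter (· ≤ b))) :
    BddBelow {a | X.countIoc a b ≤ k} := by
  have : Nonempty α := ⟨b⟩
  obtain ⟨m, hm⟩ := X.toFinset.bddBelow
  refine ⟨m, fun a ha => le_of_not_gt fun ham => ?_⟩
  have : card (X.filter (· ≤ b)) ≤ X.countIoc a b :=
    X.card_filter_le_card_filter fun x hx hxb =>
      ⟨ham.trans_le (hm (mem_toFinset.2 hx)), hxb⟩
  exact (hk.trans_le (this.trans ha)).false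

theorem bddAbove_setOf_countIoc_le {a : α} {k : ℕ} (hk : k < card (X.filter (a < ·))) :
    BddAbove {b | X.countIoc a b ≤ k} := by
  have : Nonempty α := ⟨a⟩
  obtain ⟨M, hM⟩ := X.toFinset.bddAbove
  refine ⟨M, fun b hb => le_of_not_gt fun hMb => ?_⟩
  have : card (X.filter (a < ·)) ≤ X.countIoc a b :=
    X.card_filter_le_card_filter fun x hx hax =>
      ⟨hax, (hM (mem_toFinset.2 hx)).trans hMb.le⟩
  exact (hk.trans_le (this.trans hb)).false

end LinearOrder

section ConditionallyComplete

variable [ConditionallyCompleteLinearOrder α] [DenselyOrdered α] [NoMaxOrder α] (X : Multiset α)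

theorem setOf_countIoc_le_eq_Ici {b : α} {k : ℕ} (hbdd : BddBelow {a | X.countIoc a b ≤ k}) :
    {a | X.countIoc a b ≤ k} = Set.Ici (sInf {a | X.countIoc a b ≤ k}) := by
  set S := {a | X.countIoc a b ≤ k}
  have hne : S.Nonempty := ⟨b, by simp [S, countIoc_self]⟩
  have hmem : sInf S ∈ S := by
    obtain ⟨a', ha', hle⟩ := X.exists_gt_countIoc_le_countIoc_left (sInf S)
    obtain ⟨s, hs, hsa'⟩ := exists_lt_of_csInf_lt hne ha'
    exact (hle b).trans ((X.countIoc_mono hsa'.le le_rfl).trans hs)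
  ext a
  exact ⟨fun ha => csInf_le hbdd ha, fun ha => (X.countIoc_mono ha le_rfl).trans hmem⟩

theorem setOf_countIoc_le_eq_Iio {a : α} {k : ℕ} (hbdd : BddAbove {b | X.countIoc a b ≤ k}) :
    {b | X.countIoc a b ≤ k} = Set.Iio (sSup {b | X.countIoc a b ≤ k}) := by
  set T := {b | X.countIoc a b ≤ k}
  have hne : T.Nonempty := ⟨a, by simp [T, countIoc_self]⟩
  have hnotMem : sSup T ∉ T := fun h => by
    obtain ⟨b', hb', hle⟩ := X.exists_gt_countIoc_le_countIoc_right (sSup T)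
    exact (le_csSup hbdd ((hle a).trans h)).not_gt hb'
  ext b
  refine ⟨fun hb => (le_csSup hbdd hb).lt_of_ne fun h => hnotMem (h ▸ hb), fun hb => ?_⟩
  obtain ⟨t, ht, hbt⟩ := exists_lt_of_lt_csSup hne hb
  exact (X.countIoc_mono le_rfl hbt.le).trans ht

end ConditionallyComplete

end Multiset

/-- Path-changeable-rate relaxation: for a finite multiset `X` of feature values,
a threshold `θ`, and a budget `k` of allowed comparison-outcome changes, if
(counting multiplicity) more than `k` elements of `X` are `≤ θ` and more than `k`
are `> θ`, then the set of thresholds `θ'` changing at most `k` comparison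
outcomes equals the half-open interval `[ℓ*, u*)` where
`ℓ* = sInf {a : card {x ∈ X : a < x ≤ θ} ≤ k}` and
`u* = sSup {b : card {x ∈ X : θ < x ≤ b} ≤ k}`. -/
theorem threshold_range_with_exceptions_is_Ico
    (X : Multiset ℝ) (θ : ℝ) (k : ℕ)
    (hle : k < Multiset.card (X.filter (fun x => x ≤ θ)))
    (hgt : k < Multiset.card (X.filter (fun x => θ < x)))
    (lstar ustar : ℝ)
    (hl : lstar = sInf {a : ℝ |
      Multiset.card (X.filter (fun x => a < x ∧ x ≤ θ)) ≤ k})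
    (hu : ustar = sSup {b : ℝ |
      Multiset.card (X.filter (fun x => θ < x ∧ x ≤ b)) ≤ k}) :
    {θ' : ℝ |
        Multiset.card (X.filter (fun x => min θ θ' < x ∧ x ≤ max θ θ')) ≤ k}
      = Set.Ico lstar ustar := by
  have hS : {a | X.countIoc a θ ≤ k} = Set.Ici lstar :=
    hl ▸ X.setOf_countIoc_le_eq_Ici (X.bddBelow_setOf_countIoc_le hle)
  have hT : {b | X.countIoc θ b ≤ k} = Set.Iio ustar :=
    hu ▸ X.setOf_countIoc_le_eq_Iio (X.bddAbove_setOf_countIoc_le hgt)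
  have hθS : θ ∈ Set.Ici lstar := hS ▸ by simp [X.countIoc_self]
  have hθT : θ ∈ Set.Iio ustar := hT ▸ by simp [X.countIoc_self]
  ext θ'
  change X.countIoc (min θ θ') (max θ θ') ≤ k ↔ θ' ∈ Set.Ico lstar ustar
  rcases le_total θ' θ with h | h
  · rw [min_eq_right h, max_eq_left h]
    exact (Set.ext_iff.1 hS θ').trans ⟨fun h' => ⟨h', h.trans_lt hθT⟩, And.left⟩
  · rw [min_eq_left h, max_eq_right h]
    exact (Set.ext_iff.1 hT θ').trans ⟨fun h' => ⟨hθS.trans h, h'⟩, And.right⟩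
end

section
/- Let p ≥ 1 and let [ℓ_1,u_1),…,[ℓ_p,u_p) be nonempty half-open real intervals with ℓ_1 ≤ … ≤ ℓ_p and with u_1,…,u_p pairwise distinct. For m ∈ {1,…,p} let β(m) be the least h ∈ {1,…,p} with ℓ_h ≥ u_m, or p+1 if none exists. For i ∈ {1,…,p} and 0 ≤ h ≤ p−i let α_i(h) be the unique m ∈ {i,…,p} such that u_m is the (h+1)-th smallest value among u_i,…,u_p. For i ∈ {1,…,p} and j ≤ p−i, let h_1 < … < h_{d_{i,j}} enumerate {h ∈ {0,…,j} : h = 0 or β(α_i(h−1)) < β(α_i(h))} (so h_1 = 0). Then for all i ∈ {1,…,p+1} and j ∈ ℕ: if i + j ≥ p + 1 then D(i,j) = 0, and if i + j < p + 1 then D(i,j) = min_{k ∈ {1,…,d_{i,j}}} D(β(α_i(h_k)), j − h_k) + 1. -/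
/-!
Upper bound: if `m = α i h` and `S` is optimal for the intervals from `β m` on with `j - h`
exceptions, then adding `ℓ (β m - 1)`, the last left endpoint below `u m`, hits every interval
of index in `[i, β m)` whose right endpoint is at least `u m`; only the `h` intervals with smaller
right endpoint can be missed in addition.

Lower bound: in an optimal set `S` for `(i, j)` let `m` be the hit interval with the least right
endpoint. The `h` intervals with smaller right endpoint are all missed, so `h ≤ j`, and the points
of `S` from `u m` on form a strictly smaller set that misses at most `j - h` of the intervals from
`β m` on, whose left endpoints are all at least `u m`. Since `h ↦ β (α i h)` is monotone, the first
index with the value `β m` is one of the breakpoints `h_k`, and it only has a larger budget.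
-/

open Classical Finset

theorem exists_le_eq_and_pred_lt {γ : Type*} [PartialOrder γ] {f : ℕ → γ} {n : ℕ}
    (hf : MonotoneOn f (Set.Iic n)) : ∃ h ≤ n, f h = f n ∧ (h = 0 ∨ f (h - 1) < f h) := by
  have hex : ∃ k, f k = f n := ⟨n, rfl⟩
  refine ⟨Nat.find hex, Nat.find_min' hex rfl, Nat.find_spec hex, ?_⟩
  rcases Nat.eq_zero_or_pos (Nat.find hex) with h0 | hpos
  · exact Or.inl h0
  · have hle : Nat.find hex ≤ n := Nat.find_min' hex rfl
    refine Or.inr (lt_of_le_of_ne (hf (Set.mem_Iic.2 (by omega)) (Set.mem_Iic.2 hle) (by omega)) ?_)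
    rw [Nat.find_spec hex]
    exact Nat.find_min hex (by omega)

section IntervalFamily

variable {ℓ u : ℕ → ℝ} {p : ℕ}

def IsFirstIndexAbove (ℓ : ℕ → ℝ) (p : ℕ) (t : ℝ) (b : ℕ) : Prop :=
  ((∃ h, 1 ≤ h ∧ h ≤ p ∧ t ≤ ℓ h) → IsLeast {h | 1 ≤ h ∧ h ≤ p ∧ t ≤ ℓ h} b) ∧
    ((¬ ∃ h, 1 ≤ h ∧ h ≤ p ∧ t ≤ ℓ h) → b = p + 1)

namespace IsFirstIndexAbove

variable {t t' : ℝ} {b b' : ℕ}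

theorem one_le (hb : IsFirstIndexAbove ℓ p t b) : 1 ≤ b := by
  by_cases hex : ∃ h, 1 ≤ h ∧ h ≤ p ∧ t ≤ ℓ h
  · exact (hb.1 hex).1.1
  · rw [hb.2 hex]; omega

theorem le_succ (hb : IsFirstIndexAbove ℓ p t b) : b ≤ p + 1 := by
  by_cases hex : ∃ h, 1 ≤ h ∧ h ≤ p ∧ t ≤ ℓ h
  · exact (hb.1 hex).1.2.1.trans p.le_succ
  · exact (hb.2 hex).le

theorem le_apply_self (hb : IsFirstIndexAbove ℓ p t b) (hbp : b ≤ p) : t ≤ ℓ b := by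
  by_cases hex : ∃ h, 1 ≤ h ∧ h ≤ p ∧ t ≤ ℓ h
  · exact (hb.1 hex).1.2.2
  · rw [hb.2 hex] at hbp; omega

theorem le_of_le_apply (hb : IsFirstIndexAbove ℓ p t b) {g : ℕ} (hg1 : 1 ≤ g) (hgp : g ≤ p)
    (htg : t ≤ ℓ g) : b ≤ g :=
  (hb.1 ⟨g, hg1, hgp, htg⟩).2 ⟨hg1, hgp, htg⟩

theorem apply_lt_of_lt (hb : IsFirstIndexAbove ℓ p t b) {g : ℕ} (hg1 : 1 ≤ g) (hgb : g < b) :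
    ℓ g < t :=
  not_le.1 fun htg => (hb.le_of_le_apply hg1 (by have := hb.le_succ; omega) htg).not_gt hgb

theorem le_apply_of_le (hℓ : MonotoneOn ℓ (Set.Icc 1 p)) (hb : IsFirstIndexAbove ℓ p t b)
    {g : ℕ} (hbg : b ≤ g) (hgp : g ≤ p) : t ≤ ℓ g :=
  (hb.le_apply_self (hbg.trans hgp)).trans
    (hℓ ⟨hb.one_le, hbg.trans hgp⟩ ⟨hb.one_le.trans hbg, hgp⟩ hbg)

theorem lt_of_apply_lt (hℓ : MonotoneOn ℓ (Set.Icc 1 p)) (hb : IsFirstIndexAbove ℓ p t b)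
    {g : ℕ} (hgp : g ≤ p) (hgt : ℓ g < t) : g < b :=
  not_le.1 fun hbg => (hb.le_apply_of_le hℓ hbg hgp).not_gt hgt

theorem mono (hb : IsFirstIndexAbove ℓ p t b) (hb' : IsFirstIndexAbove ℓ p t' b')
    (htt' : t ≤ t') : b ≤ b' := by
  rcases Nat.lt_or_ge p b' with hb'p | hb'p
  · exact hb.le_succ.trans hb'p
  · exact hb.le_of_le_apply hb'.one_le hb'p (htt'.trans (hb'.le_apply_self hb'p))

end IsFirstIndexAbove

theorem lt_of_isFirstIndexAbove (hne : ∀ h, 1 ≤ h → h ≤ p → ℓ h < u h)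
    (hℓ : MonotoneOn ℓ (Set.Icc 1 p)) {m b : ℕ} (hm1 : 1 ≤ m) (hmp : m ≤ p)
    (hb : IsFirstIndexAbove ℓ p (u m) b) : m < b :=
  hb.lt_of_apply_lt hℓ hmp (hne m hm1 hmp)

noncomputable def numBelow (u : ℕ → ℝ) (i p : ℕ) (t : ℝ) : ℕ := #{g ∈ Icc i p | u g < t}

theorem numBelow_lt_numBelow {i m : ℕ} {t : ℝ} (hm : m ∈ Icc i p) (hmt : u m < t) :
    numBelow u i p (u m) < numBelow u i p t := by
  refine card_lt_card ((ssubset_iff_of_subset ?_).2 ⟨m, ?_, ?_⟩)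
  · exact monotone_filter_right _ fun _ _ hg => hg.trans hmt
  · exact mem_filter.2 ⟨hm, hmt⟩
  · simp

theorem le_of_numBelow_le {i a b : ℕ} (ha : a ∈ Icc i p)
    (h : numBelow u i p (u b) ≤ numBelow u i p (u a)) : u b ≤ u a :=
  not_lt.1 fun hab => (numBelow_lt_numBelow ha hab).not_ge h

theorem strictMonoOn_of_numBelow_eq {i n : ℕ} {α : ℕ → ℕ}
    (hα : ∀ h ≤ n, α h ∈ Icc i p ∧ numBelow u i p (u (α h)) = h) :
    StrictMonoOn (fun h => u (α h)) (Set.Iic n) := by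
  intro a ha b hb hab
  refine lt_of_le_of_ne (le_of_numBelow_le (hα b hb).1 ?_) fun he => hab.ne ?_
  · rw [(hα a ha).2, (hα b hb).2]; exact hab.le
  · rw [← (hα a ha).2, ← (hα b hb).2]; simp only [he]

theorem monotoneOn_of_numBelow_eq {i n : ℕ} {α β : ℕ → ℕ}
    (hα : ∀ h ≤ n, α h ∈ Icc i p ∧ numBelow u i p (u (α h)) = h)
    (hβ : ∀ h ≤ n, IsFirstIndexAbove ℓ p (u (α h)) (β (α h))) :
    MonotoneOn (fun h => β (α h)) (Set.Iic n) := fun a ha b hb hab =>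
  (hβ a ha).mono (hβ b hb) ((strictMonoOn_of_numBelow_eq hα).monotoneOn ha hb hab)

noncomputable def missedIntervals (ℓ u : ℕ → ℝ) (p i : ℕ) (S : Finset ℝ) : Finset ℕ :=
  {h ∈ Icc i p | ∀ x ∈ S, x ∉ Set.Ico (ℓ h) (u h)}

noncomputable def minHittingCard (ℓ u : ℕ → ℝ) (p i j : ℕ) : ℕ :=
  sInf {c | ∃ S : Finset ℝ, #S = c ∧ #(missedIntervals ℓ u p i S) ≤ j}

theorem minHittingCard_eq_zero {i j : ℕ} (hij : p + 1 ≤ i + j) : minHittingCard ℓ u p i j = 0 :=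
  Nat.sInf_eq_zero.2 <| Or.inl ⟨∅, card_empty,
    (card_filter_le _ _).trans (by rw [Nat.card_Icc]; omega)⟩

theorem minHittingCard_le {i j : ℕ} {S : Finset ℝ} (hS : #(missedIntervals ℓ u p i S) ≤ j) :
    minHittingCard ℓ u p i j ≤ #S :=
  Nat.sInf_le ⟨S, rfl, hS⟩

theorem exists_card_eq_minHittingCard (hne : ∀ h, 1 ≤ h → h ≤ p → ℓ h < u h) {i : ℕ}
    (hi : 1 ≤ i) (j : ℕ) :
    ∃ S : Finset ℝ, #S = minHittingCard ℓ u p i j ∧ #(missedIntervals ℓ u p i S) ≤ j := by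
  refine Nat.sInf_mem (s := {c | ∃ S : Finset ℝ, #S = c ∧ #(missedIntervals ℓ u p i S) ≤ j})
    ⟨_, (Icc i p).image ℓ, rfl, ?_⟩
  suffices missedIntervals ℓ u p i ((Icc i p).image ℓ) = ∅ by simp [this]
  refine filter_eq_empty_iff.2 fun g hg hmiss => ?_
  rw [mem_Icc] at hg
  exact hmiss (ℓ g) (mem_image_of_mem ℓ (mem_Icc.2 hg)) ⟨le_rfl, hne g (by omega) hg.2⟩

theorem minHittingCard_antitone (hne : ∀ h, 1 ≤ h → h ≤ p → ℓ h < u h) {i : ℕ} (hi : 1 ≤ i) :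
    Antitone (minHittingCard ℓ u p i) := fun j _ hjj' => by
  obtain ⟨S, hS, hmiss⟩ := exists_card_eq_minHittingCard hne hi j
  exact hS ▸ minHittingCard_le (hmiss.trans hjj')

theorem missedIntervals_insert_subset (hℓ : MonotoneOn ℓ (Set.Icc 1 p)) {i b : ℕ} {t : ℝ}
    (hi : 1 ≤ i) (hbp : b ≤ p + 1) (hbt : ℓ (b - 1) < t) (S : Finset ℝ) :
    missedIntervals ℓ u p i (insert (ℓ (b - 1)) S) ⊆
      {g ∈ Icc i p | u g < t} ∪ missedIntervals ℓ u p b S := by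
  intro g hg
  simp only [missedIntervals, mem_filter, mem_insert, forall_eq_or_imp, mem_union,
    mem_Icc] at hg ⊢
  obtain ⟨⟨hig, hgp⟩, hx, hS⟩ := hg
  by_cases hgt : u g < t
  · exact Or.inl ⟨⟨hig, hgp⟩, hgt⟩
  refine Or.inr ⟨⟨not_lt.1 fun hgb => hx ⟨?_, ?_⟩, hgp⟩, hS⟩
  · exact hℓ ⟨by omega, hgp⟩ ⟨by omega, by omega⟩ (by omega)
  · exact hbt.trans_le (not_lt.1 hgt)

theorem minHittingCard_le_add_one (hne : ∀ h, 1 ≤ h → h ≤ p → ℓ h < u h)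
    (hℓ : MonotoneOn ℓ (Set.Icc 1 p)) {i j m b : ℕ} (hi : 1 ≤ i) (hm : m ∈ Icc i p)
    (hb : IsFirstIndexAbove ℓ p (u m) b) (hj : numBelow u i p (u m) ≤ j) :
    minHittingCard ℓ u p i j ≤ minHittingCard ℓ u p b (j - numBelow u i p (u m)) + 1 := by
  rw [mem_Icc] at hm
  have hmb := lt_of_isFirstIndexAbove hne hℓ (by omega) hm.2 hb
  obtain ⟨S, hS, hmiss⟩ := exists_card_eq_minHittingCard hne hb.one_le (j - numBelow u i p (u m))
  have hsub := missedIntervals_insert_subset (u := u) hℓ hi hb.le_succ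
    (hb.apply_lt_of_lt (by omega) (by omega)) S
  have hmiss' : #(missedIntervals ℓ u p i (insert (ℓ (b - 1)) S)) ≤ j :=
    calc _ ≤ #({g ∈ Icc i p | u g < u m} ∪ missedIntervals ℓ u p b S) := card_le_card hsub
      _ ≤ numBelow u i p (u m) + #(missedIntervals ℓ u p b S) := card_union_le _ _
      _ ≤ j := by omega
  calc minHittingCard ℓ u p i j ≤ #(insert (ℓ (b - 1)) S) := minHittingCard_le hmiss'
    _ ≤ #S + 1 := card_insert_le _ _
    _ = _ := by rw [hS]

theorem missedIntervals_filter_subset (hne : ∀ h, 1 ≤ h → h ≤ p → ℓ h < u h) {i b : ℕ}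
    {t : ℝ} (hi : 1 ≤ i) (hib : i ≤ b) (hbt : ∀ g ∈ Icc b p, t ≤ ℓ g) (S : Finset ℝ) :
    missedIntervals ℓ u p b {x ∈ S | t ≤ x} ⊆
      missedIntervals ℓ u p i S \ {g ∈ Icc i p | u g < t} := by
  intro g hg
  simp only [missedIntervals, mem_filter, mem_sdiff] at hg ⊢
  obtain ⟨hgI, hS⟩ := hg
  have htg := hbt g hgI
  rw [mem_Icc] at hgI
  refine ⟨⟨mem_Icc.2 ⟨by omega, hgI.2⟩, fun x hx hxg => hS x ⟨hx, htg.trans hxg.1⟩ hxg⟩,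
    fun h => ?_⟩
  linarith [h.2, hne g (by omega) hgI.2]

theorem exists_minHittingCard_add_one_le (hne : ∀ h, 1 ≤ h → h ≤ p → ℓ h < u h) {i j : ℕ}
    (hi : 1 ≤ i) (hij : i + j < p + 1) :
    ∃ m ∈ Icc i p, numBelow u i p (u m) ≤ j ∧ ∀ b, i ≤ b → (∀ g ∈ Icc b p, u m ≤ ℓ g) →
      minHittingCard ℓ u p b (j - numBelow u i p (u m)) + 1 ≤ minHittingCard ℓ u p i j := by
  obtain ⟨S, hS, hmiss⟩ := exists_card_eq_minHittingCard hne hi j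
  have hhit : (Icc i p \ missedIntervals ℓ u p i S).Nonempty := by
    refine sdiff_nonempty.2 fun hsub => ?_
    have := (card_le_card hsub).trans hmiss
    rw [Nat.card_Icc] at this
    omega
  obtain ⟨m, hm, hmin⟩ := exists_min_image _ u hhit
  obtain ⟨hmI, hmS⟩ := mem_sdiff.1 hm
  have hbelow : {g ∈ Icc i p | u g < u m} ⊆ missedIntervals ℓ u p i S := fun g hg => by
    rw [mem_filter] at hg
    by_contra hgS
    exact (hmin g (mem_sdiff.2 ⟨hg.1, hgS⟩)).not_gt hg.2
  refine ⟨m, hmI, (card_le_card hbelow).trans hmiss, fun b hib hbt => ?_⟩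
  obtain ⟨x, hxS, hxm⟩ : ∃ x ∈ S, x ∈ Set.Ico (ℓ m) (u m) := by
    simpa [missedIntervals, hmI] using hmS
  have hcard : #{y ∈ S | u m ≤ y} < #S :=
    card_lt_card (filter_ssubset.2 ⟨x, hxS, not_le.2 hxm.2⟩)
  have hmiss' : #(missedIntervals ℓ u p b {y ∈ S | u m ≤ y}) ≤ j - numBelow u i p (u m) := by
    have := card_le_card (missedIntervals_filter_subset hne hi hib hbt S)
    rw [card_sdiff_of_subset hbelow] at this
    unfold numBelow
    omega
  have := minHittingCard_le hmiss'
  omega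

theorem exists_breakpoint_minHittingCard_add_one_le (hne : ∀ h, 1 ≤ h → h ≤ p → ℓ h < u h)
    (hℓ : MonotoneOn ℓ (Set.Icc 1 p)) {i j : ℕ} {α β : ℕ → ℕ} (hi : 1 ≤ i)
    (hij : i + j < p + 1) (hα : ∀ h ≤ p - i, α h ∈ Icc i p ∧ numBelow u i p (u (α h)) = h)
    (hβ : ∀ m ∈ Icc i p, IsFirstIndexAbove ℓ p (u m) (β m)) :
    ∃ h ≤ j, (h = 0 ∨ β (α (h - 1)) < β (α h)) ∧
      minHittingCard ℓ u p (β (α h)) (j - h) + 1 ≤ minHittingCard ℓ u p i j := by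
  obtain ⟨m, hm, hkj, hle⟩ := exists_minHittingCard_add_one_le hne hi hij
  set k := numBelow u i p (u m)
  obtain ⟨hkI, hrank⟩ := hα k (by omega)
  rw [mem_Icc] at hkI
  have hb := hβ _ (mem_Icc.2 hkI)
  have hβα := monotoneOn_of_numBelow_eq hα fun h hh => hβ _ (hα h hh).1
  obtain ⟨h, hhk, hβh, hbreak⟩ :=
    exists_le_eq_and_pred_lt (hβα.mono (Set.Iic_subset_Iic.2 (show k ≤ p - i by omega)))
  have hum : u m ≤ u (α k) := le_of_numBelow_le (mem_Icc.2 hkI) hrank.ge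
  have hik : i < β (α k) :=
    hkI.1.trans_lt (lt_of_isFirstIndexAbove hne hℓ (by omega) hkI.2 hb)
  refine ⟨h, hhk.trans hkj, hbreak, ?_⟩
  rw [hβh]
  calc _ ≤ minHittingCard ℓ u p (β (α k)) (j - k) + 1 := by
        gcongr
        exact minHittingCard_antitone hne hb.one_le (by omega)
    _ ≤ _ := hle _ hik.le fun g hg =>
        hum.trans (hb.le_apply_of_le hℓ (mem_Icc.1 hg).1 (mem_Icc.1 hg).2)

end IntervalFamily

theorem exception_allowable_recursion_general
    (p : ℕ) (ℓ u : ℕ → ℝ)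
    (hne : ∀ h, 1 ≤ h → h ≤ p → ℓ h < u h)
    (hsorted : ∀ h, 1 ≤ h → h < p → ℓ h ≤ ℓ (h + 1))
    (β : ℕ → ℕ)
    (hβ : ∀ m, 1 ≤ m → m ≤ p →
      ((∃ h, 1 ≤ h ∧ h ≤ p ∧ u m ≤ ℓ h) →
        IsLeast {h | 1 ≤ h ∧ h ≤ p ∧ u m ≤ ℓ h} (β m)) ∧
      ((¬ ∃ h, 1 ≤ h ∧ h ≤ p ∧ u m ≤ ℓ h) → β m = p + 1))
    (α : ℕ → ℕ → ℕ)
    (hα : ∀ i h, 1 ≤ i → i ≤ p → h ≤ p - i →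
      i ≤ α i h ∧ α i h ≤ p ∧
        ((Finset.Icc i p).filter (fun g => u g < u (α i h))).card = h)
    (D : ℕ → ℕ → ℕ)
    (hD : ∀ i j, 1 ≤ i → i ≤ p + 1 →
      D i j = sInf {c | ∃ S : Finset ℝ, S.card = c ∧
        ((Finset.Icc i p).filter
          (fun h => ∀ x ∈ S, x ∉ Set.Ico (ℓ h) (u h))).card ≤ j}) :
    ∀ i j, 1 ≤ i → i ≤ p + 1 →
      (p + 1 ≤ i + j → D i j = 0) ∧
      (i + j < p + 1 →
        D i j = sInf {v | ∃ h, h ≤ j ∧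
          (h = 0 ∨ β (α i (h - 1)) < β (α i h)) ∧
          v = D (β (α i h)) (j - h) + 1}) := by
  have hℓ : MonotoneOn ℓ (Set.Icc 1 p) := monotoneOn_of_le_succ Set.ordConnected_Icc
    fun h _ hh hh1 => hsorted h hh.1 (by simpa using hh1.2)
  intro i j hi hip
  have hβi : ∀ m ∈ Icc i p, IsFirstIndexAbove ℓ p (u m) (β m) := fun m hm =>
    hβ m (hi.trans (mem_Icc.1 hm).1) (mem_Icc.1 hm).2
  have hDβ : ∀ m ∈ Icc i p, ∀ j, D (β m) j = minHittingCard ℓ u p (β m) j := fun m hm j =>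
    hD _ _ (hβi m hm).one_le (hβi m hm).le_succ
  rw [hD i j hi hip]
  refine ⟨minHittingCard_eq_zero, fun hij => ?_⟩
  have hαi : ∀ h ≤ p - i, α i h ∈ Icc i p ∧ numBelow u i p (u (α i h)) = h := fun h hh =>
    have ⟨hiα, hαp, hrank⟩ := hα i h hi (by omega) hh
    ⟨mem_Icc.2 ⟨hiα, hαp⟩, hrank⟩
  apply le_antisymm
  · refine le_csInf ⟨_, 0, j.zero_le, Or.inl rfl, rfl⟩ ?_
    rintro _ ⟨h, hhj, -, rfl⟩
    obtain ⟨hhI, hrank⟩ := hαi h (by omega)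
    have := minHittingCard_le_add_one (j := j) hne hℓ hi hhI (hβi _ hhI) (by omega)
    rw [hrank] at this
    rwa [hDβ _ hhI]
  · obtain ⟨h, hhj, hbreak, hle⟩ :=
      exists_breakpoint_minHittingCard_add_one_le hne hℓ hi hij hαi hβi
    refine le_trans (Nat.sInf_le ⟨h, hhj, hbreak, rfl⟩) ?_
    rwa [hDβ _ (hαi h (by omega)).1]

/-- The recursion for the exception-allowable minimum intersecting set problem.
Intervals `[ℓ h, u h)` (`h = 1,…,p`) are sorted by `ℓ` with pairwise distinct
upper endpoints. `D i j` is the least cardinality of a finite set missing at most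
`j` of the intervals indexed by `i,…,p`. `β m` is the least `h ∈ {1,…,p}` with
`ℓ h ≥ u m` (or `p+1` if none), and `α i h` is the index in `{i,…,p}` of the
`(h+1)`-th smallest value among `u i, …, u p` (characterized by having exactly
`h` strictly smaller values among them). Then `D i j = 0` whenever
`i + j ≥ p + 1`, and otherwise `D i j` is the minimum of
`D (β (α i h)) (j - h) + 1` over the indices `h ≤ j` with `h = 0` or
`β (α i (h-1)) < β (α i h)`. -/
theorem exception_allowable_recursion
    (p : ℕ) (hp : 1 ≤ p) (ℓ u : ℕ → ℝ)
    (hne : ∀ h, 1 ≤ h → h ≤ p → ℓ h < u h)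
    (hsorted : ∀ h, 1 ≤ h → h < p → ℓ h ≤ ℓ (h + 1))
    (hdist : ∀ h h', 1 ≤ h → h ≤ p → 1 ≤ h' → h' ≤ p → u h = u h' → h = h')
    (β : ℕ → ℕ)
    (hβ : ∀ m, 1 ≤ m → m ≤ p →
      ((∃ h, 1 ≤ h ∧ h ≤ p ∧ u m ≤ ℓ h) →
        IsLeast {h | 1 ≤ h ∧ h ≤ p ∧ u m ≤ ℓ h} (β m)) ∧
      ((¬ ∃ h, 1 ≤ h ∧ h ≤ p ∧ u m ≤ ℓ h) → β m = p + 1))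
    (α : ℕ → ℕ → ℕ)
    (hα : ∀ i h, 1 ≤ i → i ≤ p → h ≤ p - i →
      i ≤ α i h ∧ α i h ≤ p ∧
        ((Finset.Icc i p).filter (fun g => u g < u (α i h))).card = h)
    (D : ℕ → ℕ → ℕ)
    (hD : ∀ i j, 1 ≤ i → i ≤ p + 1 →
      D i j = sInf {c | ∃ S : Finset ℝ, S.card = c ∧
        ((Finset.Icc i p).filter
          (fun h => ∀ x ∈ S, x ∉ Set.Ico (ℓ h) (u h))).card ≤ j}) :
    ∀ i j, 1 ≤ i → i ≤ p + 1 →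
      (p + 1 ≤ i + j → D i j = 0) ∧
      (i + j < p + 1 →
        D i j = sInf {v | ∃ h, h ≤ j ∧
          (h = 0 ∨ β (α i (h - 1)) < β (α i h)) ∧
          v = D (β (α i h)) (j - h) + 1}) :=
  exception_allowable_recursion_general p ℓ u hne hsorted β hβ α hα D hD
end

section
/- Let p ≥ 1 and let [ℓ_1,u_1),…,[ℓ_p,u_p) be nonempty half-open real intervals with ℓ_1 ≤ … ≤ ℓ_p. Let i ∈ {1,…,p} and j ∈ ℕ, and suppose the number of indices m with i ≤ m ≤ p and u_m < u_i is strictly greater than j. Then D(i,j) = D(i+1,j), i.e., interval [ℓ_i,u_i) can be removed from consideration without changing the optimum. (This is the Remark that D(i,j) = D(i+1,j) whenever j is smaller than the rank h satisfying α_i(h) = i.) -/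
/-!
Since the left endpoints are sorted, every interval `I_m` with `m ≥ i` and `u_m < u_i` is
contained in `I_i`. A set missing `I_i` therefore misses all of them, and there are more than
`j` such `m > i`; so every `(i+1, j)`-admissible set meets `I_i`, and for a set meeting `I_i`
the two admissibility conditions coincide.
-/

open Finset

section Intervals

variable {α : Type*} [LinearOrder α] (ℓ u : ℕ → α)

def missedBy (S : Finset α) (s : Finset ℕ) : Finset ℕ :=
  s.filter fun h => ∀ x ∈ S, x ∉ Set.Ico (ℓ h) (u h)

variable {ℓ u}

lemma missedBy_insert_of_mem {S : Finset α} {i : ℕ} {x : α} (hxS : x ∈ S)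
    (hxi : x ∈ Set.Ico (ℓ i) (u i)) (s : Finset ℕ) :
    missedBy ℓ u S (insert i s) = missedBy ℓ u S s := by
  rw [missedBy, filter_insert, if_neg fun hmiss => hmiss x hxS hxi]
  rfl

lemma filter_lt_subset_missedBy_erase {S : Finset α} {i : ℕ}
    (hmiss : ∀ x ∈ S, x ∉ Set.Ico (ℓ i) (u i)) {s : Finset ℕ} (hℓ : ∀ m ∈ s, ℓ i ≤ ℓ m) :
    s.filter (fun m => u m < u i) ⊆ missedBy ℓ u S (s.erase i) := by
  intro m hm
  obtain ⟨hms, hum⟩ := mem_filter.mp hm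
  refine mem_filter.mpr ⟨mem_erase.mpr ⟨fun hmi => (hmi ▸ hum).false, hms⟩, ?_⟩
  intro x hxS hxm
  exact hmiss x hxS (Set.Ico_subset_Ico (hℓ m hms) hum.le hxm)

lemma missedBy_Icc_card_le_iff {p i j : ℕ}
    (hℓ : ∀ m ∈ Icc i p, ℓ i ≤ ℓ m) (hip : i ≤ p)
    (hrank : j < ((Icc i p).filter fun m => u m < u i).card) (S : Finset α) :
    (missedBy ℓ u S (Icc i p)).card ≤ j ↔ (missedBy ℓ u S (Icc (i + 1) p)).card ≤ j := by
  have hIcc : (Icc i p).erase i = Icc (i + 1) p := by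
    rw [Icc_erase_left, Icc_add_one_left_eq_Ioc]
  refine ⟨fun h => (card_le_card (filter_subset_filter _ (hIcc ▸ erase_subset _ _))).trans h,
    fun h => ?_⟩
  have hhit : ∃ x ∈ S, x ∈ Set.Ico (ℓ i) (u i) := by
    by_contra! hmiss
    have := card_le_card (hIcc ▸ filter_lt_subset_missedBy_erase hmiss hℓ)
    omega
  obtain ⟨x, hxS, hxi⟩ := hhit
  rwa [← insert_Icc_add_one_left_eq_Icc hip, missedBy_insert_of_mem hxS hxi]

end Intervals

lemma le_of_sorted_of_mem_Icc {α : Type*} [Preorder α] {ℓ : ℕ → α} {p : ℕ}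
    (hsorted : ∀ h, 1 ≤ h → h < p → ℓ h ≤ ℓ (h + 1)) {i : ℕ} (hi : 1 ≤ i) :
    ∀ m ∈ Icc i p, ℓ i ≤ ℓ m := by
  have hmono : MonotoneOn ℓ (Set.Icc 1 p) :=
    monotoneOn_of_le_succ Set.ordConnected_Icc fun a _ ha hsa =>
      hsorted a ha.1 (Nat.succ_le_iff.mp hsa.2)
  intro m hm
  obtain ⟨him, hmp⟩ := mem_Icc.mp hm
  exact hmono ⟨hi, him.trans hmp⟩ ⟨hi.trans him, hmp⟩ him

theorem D_eq_of_rank_gt_general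
    (p : ℕ) (ℓ u : ℕ → ℝ)
    (hsorted : ∀ h, 1 ≤ h → h < p → ℓ h ≤ ℓ (h + 1))
    (D : ℕ → ℕ → ℕ)
    (hD : ∀ i j, 1 ≤ i → i ≤ p + 1 →
      D i j = sInf {c | ∃ S : Finset ℝ, S.card = c ∧
        ((Finset.Icc i p).filter
          (fun h => ∀ x ∈ S, x ∉ Set.Ico (ℓ h) (u h))).card ≤ j})
    (i j : ℕ) (hi1 : 1 ≤ i) (hip : i ≤ p)
    (hrank : j < ((Finset.Icc i p).filter (fun m => u m < u i)).card) :
    D i j = D (i + 1) j := by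
  rw [hD i j hi1 (by omega), hD (i + 1) j (by omega) (by omega)]
  congr 1
  ext c
  exact exists_congr fun S => and_congr_right' <|
    missedBy_Icc_card_le_iff (le_of_sorted_of_mem_Icc hsorted hi1) hip hrank S

/-- Remark on the recursion for the exception-allowable minimum intersecting set
problem: for sorted nonempty half-open intervals `[ℓ h, u h)` (`h = 1,…,p`), if
the number of indices `m ∈ {i,…,p}` with `u m < u i` is strictly greater than
`j`, then `D i j = D (i+1) j`, where `D i j` is the least cardinality of a
finite set of reals missing at most `j` of the intervals indexed by `i,…,p`. -/
theorem D_eq_of_rank_gt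
    (p : ℕ) (hp : 1 ≤ p) (ℓ u : ℕ → ℝ)
    (hne : ∀ h, 1 ≤ h → h ≤ p → ℓ h < u h)
    (hsorted : ∀ h, 1 ≤ h → h < p → ℓ h ≤ ℓ (h + 1))
    (D : ℕ → ℕ → ℕ)
    (hD : ∀ i j, 1 ≤ i → i ≤ p + 1 →
      D i j = sInf {c | ∃ S : Finset ℝ, S.card = c ∧
        ((Finset.Icc i p).filter
          (fun h => ∀ x ∈ S, x ∉ Set.Ico (ℓ h) (u h))).card ≤ j})
    (i j : ℕ) (hi1 : 1 ≤ i) (hip : i ≤ p)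
    (hrank : j < ((Finset.Icc i p).filter (fun m => u m < u i)).card) :
    D i j = D (i + 1) j :=
  D_eq_of_rank_gt_general p ℓ u hsorted D hD i j hi1 hip hrank
end

section
/- Let p ≥ 1, let [ℓ_1,u_1),…,[ℓ_p,u_p) be nonempty half-open real intervals, let i ∈ {1,…,p} and j ∈ ℕ with i + j < p + 1, and let v be the (j+1)-th smallest element of the multiset {u_i, u_{i+1}, …, u_p}. Then every set S ⊆ ℝ for which the number of indices h with i ≤ h ≤ p and S ∩ [ℓ_h,u_h) = ∅ is at most j must contain an element s with s < v. (This is the claim in the proof of the recursion theorem that the minimum element s_1 of any optimal set satisfies s_1 < u_{α_i(j)}.) -/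
/-! Since `v` is the `(j+1)`-th smallest of the `u h`, at least `j + 1` indices `h` have
`u h ≤ v`. As `S` misses at most `j` intervals, it meets some `[ℓ h, u h)` with `u h ≤ v`,
and any point of `S` there lies below `v`. -/

theorem List.lt_length_filter_le_of_getElem?_eq {α : Type*} [Preorder α] [DecidableLE α]
    {l : List α} (hl : l.Pairwise (· ≤ ·)) {j : ℕ} {v : α} (hv : l[j]? = some v) :
    j < (l.filter (· ≤ v)).length := by
  obtain ⟨hj, rfl⟩ := List.getElem?_eq_some_iff.mp hv
  have htake : (l.take (j + 1)).filter (· ≤ l[j]) = l.take (j + 1) := by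
    refine List.filter_eq_self.mpr fun x hx => ?_
    obtain ⟨k, hk, rfl⟩ := List.getElem_of_mem hx
    rw [List.length_take] at hk
    rw [List.getElem_take, decide_eq_true_iff]
    rcases (Nat.lt_succ_iff.mp (lt_min_iff.mp hk).1).lt_or_eq with hkj | rfl
    · exact List.pairwise_iff_getElem.mp hl k j _ hj hkj
    · exact le_rfl
  calc j < (l.take (j + 1)).length := by rw [List.length_take]; omega
    _ = ((l.take (j + 1)).filter (· ≤ l[j])).length := by rw [htake]
    _ ≤ (l.filter (· ≤ l[j])).length := ((List.take_sublist _ _).filter _).length_le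

theorem Multiset.lt_card_filter_le_of_sort_getElem?_eq {α : Type*} [LinearOrder α]
    {s : Multiset α} {j : ℕ} {v : α} (hv : (s.sort (· ≤ ·))[j]? = some v) :
    j < (s.filter (· ≤ v)).card := by
  have h := List.lt_length_filter_le_of_getElem?_eq (s.pairwise_sort (· ≤ ·)) hv
  conv_rhs => rw [← s.sort_eq (· ≤ ·), Multiset.filter_coe, Multiset.coe_card]
  exact h

open Classical in
theorem exists_mem_lt_of_card_filter_lt {ι α : Type*} [Preorder α] [DecidableLE α] {s : Finset ι}
    {ℓ u : ι → α} {S : Set α} {v : α}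
    (hcard : (s.filter fun h => ∀ x ∈ S, x ∉ Set.Ico (ℓ h) (u h)).card <
      (s.filter fun h => u h ≤ v).card) :
    ∃ x ∈ S, x < v := by
  obtain ⟨k, hk, hhit⟩ := Finset.exists_mem_notMem_of_card_lt_card hcard
  rw [Finset.mem_filter] at hk
  simp only [Finset.mem_filter, hk.1, true_and, not_forall, not_not] at hhit
  obtain ⟨x, hxS, hx⟩ := hhit
  exact ⟨x, hxS, hx.2.trans_le hk.2⟩

open Classical

theorem optimal_set_has_small_element_general
    (p : ℕ) (ℓ u : ℕ → ℝ)
    (i j : ℕ)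
    (v : ℝ)
    (hv : (Multiset.sort (Multiset.map u (Finset.Icc i p).val) (· ≤ ·))[j]? = some v) :
    ∀ S : Set ℝ,
      ((Finset.Icc i p).filter
        (fun h => ∀ x ∈ S, x ∉ Set.Ico (ℓ h) (u h))).card ≤ j →
      ∃ x ∈ S, x < v := by
  intro S hS
  have hsmall := Multiset.lt_card_filter_le_of_sort_getElem?_eq hv
  rw [Multiset.filter_map, Multiset.card_map] at hsmall
  exact exists_mem_lt_of_card_filter_lt (hS.trans_lt hsmall)

/-- In the proof of the recursion theorem: if `v` is the `(j+1)`-th smallest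
element of the multiset `{u i, u (i+1), …, u p}` (counting multiplicity) and
`i + j < p + 1`, then every set `S ⊆ ℝ` missing at most `j` of the intervals
`[ℓ h, u h)` for `i ≤ h ≤ p` contains an element strictly below `v`. -/
theorem optimal_set_has_small_element
    (p : ℕ) (hp : 1 ≤ p) (ℓ u : ℕ → ℝ)
    (hne : ∀ h, 1 ≤ h → h ≤ p → ℓ h < u h)
    (i j : ℕ) (hi1 : 1 ≤ i) (hip : i ≤ p) (hij : i + j < p + 1)
    (v : ℝ)
    (hv : (Multiset.sort (Multiset.map u (Finset.Icc i p).val) (· ≤ ·))[j]? = some v) :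
    ∀ S : Set ℝ,
      ((Finset.Icc i p).filter
        (fun h => ∀ x ∈ S, x ∉ Set.Ico (ℓ h) (u h))).card ≤ j →
      ∃ x ∈ S, x < v :=
  optimal_set_has_small_element_general p ℓ u i j v hv
end

section
/- Let p ≥ 1 and let [ℓ_1,u_1),…,[ℓ_p,u_p) be nonempty half-open real intervals with ℓ_1 ≤ … ≤ ℓ_p, and let i ∈ {1,…,p} and j ∈ ℕ with i + j < p + 1. For s ∈ ℝ let m(s) be the least index h with i ≤ h ≤ p and ℓ_h > s (or p+1 if none), and let e(i,s) = #{h : i ≤ h < m(s), u_h ≤ s}. Then D(i,j) = min { 1 + D(m(s), j − e(i,s)) : s ∈ ℝ, e(i,s) ≤ j }, and this minimum is attained. (This is the dynamic-programming decomposition underlying the recursion for D: in an optimal set the minimum element s pierces only intervals with ℓ_h ≤ s, and any prefix interval missed by s is missed by the whole set.) -/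
/-!
Let `S` be an optimal set and `s = min S`. Among the intervals with `ℓ h ≤ s`, those with
`u h ≤ s` are missed by all of `S` and the others contain `s`; the intervals with `ℓ h > s` do
not contain `s`, so `S \ {s}` must serve them alone, missing at most `j - e s` of them.
Conversely, adding any point `s` to an optimal set for the intervals with `ℓ h > s` gives an
admissible set. When the left endpoints are sorted, the intervals with `ℓ h > s` are exactly
those indexed by `m s, …, p`.
-/

open Classical

open Finset

section Piercing

variable {ι α : Type*} [LinearOrder α]

def missed (ℓ u : ι → α) (I : Finset ι) (S : Finset α) : Finset ι :=
  I.filter fun h => ∀ x ∈ S, x ∉ Set.Ico (ℓ h) (u h)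

def leftOf (ℓ u : ι → α) (I : Finset ι) (s : α) : Finset ι :=
  (I.filter (ℓ · ≤ s)).filter (u · ≤ s)

noncomputable def pierceCost (ℓ u : ι → α) (I : Finset ι) (j : ℕ) : ℕ :=
  sInf {c | ∃ S : Finset α, #S = c ∧ #(missed ℓ u I S) ≤ j}

variable {ℓ u : ι → α} {I : Finset ι} {S : Finset α} {s : α} {j : ℕ}

lemma missed_empty : missed ℓ u I ∅ = I := by
  simp [missed]

lemma missed_image_left (hI : ∀ h ∈ I, ℓ h < u h) : missed ℓ u I (I.image ℓ) = ∅ := by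
  refine filter_eq_empty_iff.2 fun h hh hmiss => ?_
  exact hmiss (ℓ h) (mem_image_of_mem ℓ hh) ⟨le_rfl, hI h hh⟩

lemma pierceCost_le_card (hS : #(missed ℓ u I S) ≤ j) : pierceCost ℓ u I j ≤ #S :=
  Nat.sInf_le ⟨S, rfl, hS⟩

lemma exists_card_eq_pierceCost (hI : ∀ h ∈ I, ℓ h < u h) (j : ℕ) :
    ∃ S : Finset α, #S = pierceCost ℓ u I j ∧ #(missed ℓ u I S) ≤ j :=
  Nat.sInf_mem (s := {c | ∃ S : Finset α, #S = c ∧ #(missed ℓ u I S) ≤ j})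
    ⟨#(I.image ℓ), I.image ℓ, rfl, by simp [missed_image_left hI]⟩

lemma missed_filter (P : ι → Prop) [DecidablePred P] :
    missed ℓ u (I.filter P) S = (missed ℓ u I S).filter P :=
  filter_comm ..

lemma card_missed_eq_add (s : α) :
    #(missed ℓ u I S) =
      #(missed ℓ u (I.filter (ℓ · ≤ s)) S) + #(missed ℓ u (I.filter (s < ℓ ·)) S) := by
  rw [missed_filter, missed_filter, ← card_filter_add_card_filter_not (fun h => ℓ h ≤ s)]
  simp only [not_le]

lemma missed_insert_of_forall_notMem (hs : ∀ h ∈ I, s ∉ Set.Ico (ℓ h) (u h)) :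
    missed ℓ u I (insert s S) = missed ℓ u I S :=
  filter_congr fun h hh => by simp only [forall_mem_insert, hs h hh, not_false_eq_true, true_and]

lemma missed_insert_subset_filter (hI : ∀ h ∈ I, ℓ h ≤ s) :
    missed ℓ u I (insert s S) ⊆ I.filter (u · ≤ s) := by
  intro h hh
  simp only [missed, mem_filter, forall_mem_insert, Set.mem_Ico, not_and, not_lt] at hh ⊢
  exact ⟨hh.1, hh.2.1 (hI h hh.1)⟩

lemma filter_subset_missed (hS : ∀ x ∈ S, s ≤ x) : I.filter (u · ≤ s) ⊆ missed ℓ u I S := by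
  intro h hh
  simp only [missed, mem_filter, Set.mem_Ico, not_and, not_lt] at hh ⊢
  exact ⟨hh.1, fun x hx _ => hh.2.trans (hS x hx)⟩

lemma pierceCost_le_one_add (hI : ∀ h ∈ I, ℓ h < u h) (s : α)
    (hs : #(leftOf ℓ u I s) ≤ j) :
    pierceCost ℓ u I j ≤
      1 + pierceCost ℓ u (I.filter (s < ℓ ·)) (j - #(leftOf ℓ u I s)) := by
  obtain ⟨T, hTcard, hTmiss⟩ := exists_card_eq_pierceCost (ℓ := ℓ) (u := u)
    (I := I.filter (s < ℓ ·)) (fun h hh => hI h (mem_filter.1 hh).1) (j - #(leftOf ℓ u I s))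
  have hlow : #(missed ℓ u (I.filter (ℓ · ≤ s)) (insert s T)) ≤ #(leftOf ℓ u I s) :=
    card_le_card (missed_insert_subset_filter fun h hh => (mem_filter.1 hh).2)
  have hhigh : missed ℓ u (I.filter (s < ℓ ·)) (insert s T) = missed ℓ u (I.filter (s < ℓ ·)) T :=
    missed_insert_of_forall_notMem fun h hh hsI => not_lt.2 hsI.1 (mem_filter.1 hh).2
  calc pierceCost ℓ u I j ≤ #(insert s T) := by
        refine pierceCost_le_card ?_
        rw [card_missed_eq_add s, hhigh]
        omega
    _ ≤ 1 + #T := by rw [add_comm]; exact card_insert_le s T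
    _ = _ := by rw [hTcard]

lemma exists_one_add_pierceCost_le (hI : ∀ h ∈ I, ℓ h < u h) (hj : j < #I) :
    ∃ s, #(leftOf ℓ u I s) ≤ j ∧
      1 + pierceCost ℓ u (I.filter (s < ℓ ·)) (j - #(leftOf ℓ u I s)) ≤
        pierceCost ℓ u I j := by
  obtain ⟨S, hScard, hSmiss⟩ := exists_card_eq_pierceCost hI j
  have hSne : S.Nonempty := by
    rw [nonempty_iff_ne_empty]
    rintro rfl
    rw [missed_empty] at hSmiss
    omega
  set s := S.min' hSne
  have hs : s ∈ S := S.min'_mem hSne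
  have hlow : #(leftOf ℓ u I s) ≤ #(missed ℓ u (I.filter (ℓ · ≤ s)) S) :=
    card_le_card (filter_subset_missed fun x hx => S.min'_le x hx)
  have hhigh : missed ℓ u (I.filter (s < ℓ ·)) (S.erase s) = missed ℓ u (I.filter (s < ℓ ·)) S := by
    conv_rhs => rw [← insert_erase hs]
    exact (missed_insert_of_forall_notMem fun h hh hsI => not_lt.2 hsI.1 (mem_filter.1 hh).2).symm
  rw [card_missed_eq_add s] at hSmiss
  refine ⟨s, hlow.trans (by omega), ?_⟩
  have hcost : pierceCost ℓ u (I.filter (s < ℓ ·)) (j - #(leftOf ℓ u I s)) ≤ #S - 1 := by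
    rw [← card_erase_of_mem hs]
    exact pierceCost_le_card (by rw [hhigh]; omega)
  have := card_pos.2 hSne
  omega

theorem isLeast_pierceCost (hI : ∀ h ∈ I, ℓ h < u h) (hj : j < #I) :
    IsLeast {v | ∃ s, #(leftOf ℓ u I s) ≤ j ∧
      v = 1 + pierceCost ℓ u (I.filter (s < ℓ ·)) (j - #(leftOf ℓ u I s))}
      (pierceCost ℓ u I j) := by
  obtain ⟨s, hs, hle⟩ := exists_one_add_pierceCost_le hI hj
  exact ⟨⟨s, hs, le_antisymm (pierceCost_le_one_add hI s hs) hle⟩,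
    fun _ ⟨s, hs, hv⟩ => hv ▸ pierceCost_le_one_add hI s hs⟩

end Piercing

section Threshold

variable {α : Type*} [LinearOrder α] {ℓ : ℕ → α} {i p m : ℕ} {s : α}

lemma monotoneOn_Icc_of_le_succ (hsorted : ∀ h, i ≤ h → h < p → ℓ h ≤ ℓ (h + 1)) :
    MonotoneOn ℓ (Set.Icc i p) :=
  monotoneOn_of_le_succ Set.ordConnected_Icc fun a _ ha hsa => by
    rw [Order.succ_eq_add_one] at hsa ⊢
    exact hsorted a ha.1 (by linarith [hsa.2])

lemma filter_Icc_eq_of_isLeast (hip : i ≤ p + 1) (hmono : MonotoneOn ℓ (Set.Icc i p))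
    (hm : ((∃ h, i ≤ h ∧ h ≤ p ∧ s < ℓ h) → IsLeast {h | i ≤ h ∧ h ≤ p ∧ s < ℓ h} m) ∧
      ((¬ ∃ h, i ≤ h ∧ h ≤ p ∧ s < ℓ h) → m = p + 1)) :
    i ≤ m ∧ m ≤ p + 1 ∧ (Icc i p).filter (ℓ · ≤ s) = Ico i m ∧
      (Icc i p).filter (s < ℓ ·) = Icc m p := by
  suffices key : i ≤ m ∧ m ≤ p + 1 ∧ ∀ h ∈ Icc i p, (s < ℓ h ↔ m ≤ h) by
    obtain ⟨him, hmp, hiff⟩ := key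
    refine ⟨him, hmp, ?_, ?_⟩ <;> ext h <;> have := hiff h <;>
      simp only [mem_filter, mem_Icc, mem_Ico, ← not_lt] at this ⊢ <;> grind
  by_cases hex : ∃ h, i ≤ h ∧ h ≤ p ∧ s < ℓ h
  · obtain ⟨⟨him, hmp, hsm⟩, hleast⟩ := hm.1 hex
    refine ⟨him, by omega, fun h hh => ⟨fun hs => hleast ⟨(mem_Icc.1 hh).1, (mem_Icc.1 hh).2, hs⟩,
      fun hmh => hsm.trans_le (hmono ⟨him, hmp⟩ (mem_Icc.1 hh) hmh)⟩⟩
  · have hmp := hm.2 hex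
    push Not at hex
    refine ⟨by omega, by omega, fun h hh => ?_⟩
    obtain ⟨hih, hhp⟩ := mem_Icc.1 hh
    exact iff_of_false (not_lt.2 (hex h hih hhp)) (by omega)

end Threshold

theorem D_dp_decomposition_general
    (p : ℕ) (ℓ u : ℕ → ℝ)
    (hne : ∀ h, 1 ≤ h → h ≤ p → ℓ h < u h)
    (hsorted : ∀ h, 1 ≤ h → h < p → ℓ h ≤ ℓ (h + 1))
    (D : ℕ → ℕ → ℕ)
    (hD : ∀ i j, 1 ≤ i → i ≤ p + 1 →
      D i j = sInf {c | ∃ S : Finset ℝ, S.card = c ∧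
        ((Finset.Icc i p).filter
          (fun h => ∀ x ∈ S, x ∉ Set.Ico (ℓ h) (u h))).card ≤ j})
    (i j : ℕ) (hi1 : 1 ≤ i) (hip : i ≤ p) (hij : i + j < p + 1)
    (m : ℝ → ℕ)
    (hm : ∀ s : ℝ,
      ((∃ h, i ≤ h ∧ h ≤ p ∧ s < ℓ h) →
        IsLeast {h | i ≤ h ∧ h ≤ p ∧ s < ℓ h} (m s)) ∧
      ((¬ ∃ h, i ≤ h ∧ h ≤ p ∧ s < ℓ h) → m s = p + 1))
    (e : ℝ → ℕ)
    (he : ∀ s : ℝ, e s = ((Finset.Ico i (m s)).filter (fun h => u h ≤ s)).card) :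
    IsLeast {v | ∃ s : ℝ, e s ≤ j ∧ v = 1 + D (m s) (j - e s)} (D i j) := by
  have hmono : MonotoneOn ℓ (Set.Icc i p) :=
    (monotoneOn_Icc_of_le_succ hsorted).mono (Set.Icc_subset_Icc_left hi1)
  have hsplit := fun s => filter_Icc_eq_of_isLeast (by omega) hmono (hm s)
  have hDi : D i j = pierceCost ℓ u (Icc i p) j := hD i j hi1 (by omega)
  have hDm : ∀ s k, D (m s) k = pierceCost ℓ u ((Icc i p).filter (s < ℓ ·)) k := fun s k => by
    obtain ⟨him, hmp, -, hhigh⟩ := hsplit s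
    rw [hD _ _ (by omega) hmp, hhigh]
    rfl
  have he' : ∀ s, e s = #(leftOf ℓ u (Icc i p) s) := fun s => by
    rw [he, leftOf, (hsplit s).2.2.1]
  simp only [hDi, hDm, he']
  refine isLeast_pierceCost (fun h hh => ?_) (by simp only [Nat.card_Icc]; omega)
  exact hne h (hi1.trans (mem_Icc.1 hh).1) (mem_Icc.1 hh).2

/-- Dynamic-programming decomposition underlying the recursion for `D`: for
sorted nonempty half-open intervals `[ℓ h, u h)` (`h = 1,…,p`), `D i j` being
the least cardinality of a finite set missing at most `j` of the intervals
indexed by `i,…,p`, with `m s` the least index `h ∈ {i,…,p}` with `ℓ h > s`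
(or `p+1` if none) and `e s = #{h : i ≤ h < m s, u h ≤ s}`, if `i + j < p + 1`
then `D i j` is the minimum, attained, of `1 + D (m s) (j - e s)` over all real
`s` with `e s ≤ j`. -/
theorem D_dp_decomposition
    (p : ℕ) (hp : 1 ≤ p) (ℓ u : ℕ → ℝ)
    (hne : ∀ h, 1 ≤ h → h ≤ p → ℓ h < u h)
    (hsorted : ∀ h, 1 ≤ h → h < p → ℓ h ≤ ℓ (h + 1))
    (D : ℕ → ℕ → ℕ)
    (hD : ∀ i j, 1 ≤ i → i ≤ p + 1 →
      D i j = sInf {c | ∃ S : Finset ℝ, S.card = c ∧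
        ((Finset.Icc i p).filter
          (fun h => ∀ x ∈ S, x ∉ Set.Ico (ℓ h) (u h))).card ≤ j})
    (i j : ℕ) (hi1 : 1 ≤ i) (hip : i ≤ p) (hij : i + j < p + 1)
    (m : ℝ → ℕ)
    (hm : ∀ s : ℝ,
      ((∃ h, i ≤ h ∧ h ≤ p ∧ s < ℓ h) →
        IsLeast {h | i ≤ h ∧ h ≤ p ∧ s < ℓ h} (m s)) ∧
      ((¬ ∃ h, i ≤ h ∧ h ≤ p ∧ s < ℓ h) → m s = p + 1))
    (e : ℝ → ℕ)
    (he : ∀ s : ℝ, e s = ((Finset.Ico i (m s)).filter (fun h => u h ≤ s)).card) :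
    IsLeast {v | ∃ s : ℝ, e s ≤ j ∧ v = 1 + D (m s) (j - e s)} (D i j) :=
  D_dp_decomposition_general p ℓ u hne hsorted D hD i j hi1 hip hij m hm e he
end
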